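/- arXiv:2004.10175 — 3 statements merged into one kernel-verified Lean document; each statement's English description precedes it below -/
import Mathlib

section
/- One-dimensional dyadic Dini lemma (Lemma 7.6): Let g : [0,1] → ℝ be a convex function with g(0) = 0, g ≥ 0, and Lipschitz constant C_g (i.e. |g(s) − g(t)| ≤ C_g·|s − t| for all s, t ∈ [0,1]). Define h(t) := g(t) − 2·g(t/2) (so h is nonnegative and nondecreasing on [0,1]). Then ∫₀¹ t⁻²·h(t) dt ≤ 4·C_g. -/
open Set MeasureTheory

/-- One-dimensional dyadic Dini lemma (Lemma 7.6): for `g` convex, nonnegative, `g(0) = 0`,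
with Lipschitz constant `Cg` on `[0,1]`, and `h(t) = g(t) − 2g(t/2)`, one has
`∫₀¹ t⁻² h(t) dt ≤ 4 Cg`. -/
theorem dyadic_dini_lemma (g : ℝ → ℝ) (Cg : ℝ)
    (hconv : ConvexOn ℝ (Icc (0:ℝ) 1) g) (hg0 : g 0 = 0)
    (hgnn : ∀ t ∈ Icc (0:ℝ) 1, 0 ≤ g t)
    (hlip : ∀ s ∈ Icc (0:ℝ) 1, ∀ t ∈ Icc (0:ℝ) 1, |g s - g t| ≤ Cg * |s - t|) :
    ∫⁻ t in Ioc (0:ℝ) 1, ENNReal.ofReal ((g t - 2 * g (t / 2)) / t ^ 2)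
      ≤ ENNReal.ofReal (4 * Cg) := by
  classical
  set h : ℝ → ℝ := fun t => g t - 2 * g (t / 2) with hh
  -- h is nonnegative on [0,1]
  have hnn : ∀ t, 0 < t → t ≤ 1 → 0 ≤ h t := by
    intro t ht0 ht1
    have hmem0 : (0:ℝ) ∈ Icc (0:ℝ) 1 := by constructor <;> norm_num
    have hmemt : t ∈ Icc (0:ℝ) 1 := ⟨le_of_lt ht0, ht1⟩
    have := hconv.2 hmem0 hmemt (by norm_num : (0:ℝ) ≤ 1/2) (by norm_num : (0:ℝ) ≤ 1/2)
      (by norm_num)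
    simp only [smul_eq_mul, hg0] at this
    have h2 : g (t/2) ≤ g t / 2 := by
      have : g (1/2 * 0 + 1/2 * t) ≤ 1/2 * 0 + 1/2 * g t := by
        have := hconv.2 hmem0 hmemt (by norm_num : (0:ℝ) ≤ 1/2) (by norm_num : (0:ℝ) ≤ 1/2)
          (by norm_num)
        simpa [hg0] using this
      have e : 1/2 * 0 + 1/2 * t = t / 2 := by ring
      rw [e] at this; linarith
    simp only [hh]; linarith
  -- h is monotone on (0,1]
  have hmono : ∀ s t : ℝ, 0 < s → s ≤ t → t ≤ 1 → h s ≤ h t := by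
    intro s t hs0 hst ht1
    rcases eq_or_lt_of_le hst with rfl | hlt
    · exact le_rfl
    have ht0 : 0 < t := lt_trans hs0 hlt
    have hm : ∀ x : ℝ, 0 ≤ x → x ≤ 1 → x ∈ Icc (0:ℝ) 1 := fun x a b => ⟨a, b⟩
    have hs2 : s/2 ∈ Icc (0:ℝ) 1 := hm _ (by linarith) (by linarith)
    have ht2 : t/2 ∈ Icc (0:ℝ) 1 := hm _ (by linarith) (by linarith)
    have hsI : s ∈ Icc (0:ℝ) 1 := hm _ (by linarith) (by linarith)
    have htI : t ∈ Icc (0:ℝ) 1 := hm _ (by linarith) (by linarith)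
    -- slope (s/2, t/2) ≤ slope (s/2, t)
    have h1 : (g (t/2) - g (s/2)) / (t/2 - s/2) ≤ (g t - g (s/2)) / (t - s/2) :=
      hconv.secant_mono hs2 ht2 htI (by intro hc; linarith) (by intro hc; linarith)
        (by linarith)
    -- slope (s/2, t) ≤ slope (s, t)
    have h2 : (g (s/2) - g t) / (s/2 - t) ≤ (g s - g t) / (s - t) :=
      hconv.secant_mono htI hs2 hsI (by intro hc; linarith) (by intro hc; linarith)
        (by linarith)
    have e2 : (g (s/2) - g t) / (s/2 - t) = (g t - g (s/2)) / (t - s/2) := by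
      rw [← neg_div_neg_eq]; ring_nf
    rw [e2] at h2
    -- combine: (g(t/2)-g(s/2))/((t-s)/2) ≤ (g t - g s)/(t-s)
    have e3 : (g s - g t) / (s - t) = (g t - g s) / (t - s) := by
      rw [← neg_div_neg_eq]; ring_nf
    rw [e3] at h2
    have key : (g (t/2) - g (s/2)) / (t/2 - s/2) ≤ (g t - g s) / (t - s) := le_trans h1 h2
    have hts : (0:ℝ) < t - s := by linarith
    have e4 : t/2 - s/2 = (t - s)/2 := by ring
    rw [e4, div_div_eq_mul_div, ] at key
    -- (g(t/2)-g(s/2)) * 2 / (t-s) ≤ (g t - g s)/(t-s)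
    have := (div_le_div_iff_of_pos_right hts).mp key
    simp only [hh]; linarith
  -- dyadic decomposition
  set c : ℝ := 1/2 with hc
  have hc0 : (0:ℝ) < c := by norm_num
  have hc1 : c < 1 := by norm_num
  have hcpow : ∀ n : ℕ, (0:ℝ) < c ^ n := fun n => pow_pos hc0 n
  have hcle1 : ∀ n : ℕ, c ^ n ≤ 1 := fun n => pow_le_one₀ (le_of_lt hc0) (le_of_lt hc1)
  set S : ℕ → Set ℝ := fun n => Ioc (c ^ (n+1)) (c ^ n) with hS
  have hcover : Ioc (0:ℝ) 1 = ⋃ n, S n := by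
    ext t
    simp only [mem_iUnion, hS, mem_Ioc]
    constructor
    · rintro ⟨ht0, ht1⟩
      have hex : ∃ n : ℕ, c ^ (n+1) < t := by
        obtain ⟨n, hn⟩ := exists_pow_lt_of_lt_one ht0 hc1
        exact ⟨n, lt_of_le_of_lt (pow_le_pow_of_le_one (le_of_lt hc0) (le_of_lt hc1)
          (by omega)) hn⟩
      refine ⟨Nat.find hex, Nat.find_spec hex, ?_⟩
      rcases Nat.eq_zero_or_pos (Nat.find hex) with h0 | hpos
      · rw [h0]; simpa using ht1
      · have hmin := Nat.find_min hex (m := Nat.find hex - 1) (by omega)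
        push_neg at hmin
        calc t ≤ c ^ (Nat.find hex - 1 + 1) := hmin
          _ = c ^ (Nat.find hex) := by congr 1; omega
    · rintro ⟨n, hn1, hn2⟩
      exact ⟨lt_of_le_of_lt (le_of_lt (hcpow (n+1))) hn1, le_trans hn2 (hcle1 n)⟩
  have hmeas : ∀ n, MeasurableSet (S n) := fun n => measurableSet_Ioc
  have hkey : ∀ i j : ℕ, i < j → Disjoint (S i) (S j) := by
    intro i j hlt
    simp only [hS]
    rw [Set.Ioc_disjoint_Ioc]
    have : c ^ j ≤ c ^ (i+1) :=
      pow_le_pow_of_le_one (le_of_lt hc0) (le_of_lt hc1) (by omega)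
    calc min (c ^ i) (c ^ j) = c ^ j := min_eq_right
            (pow_le_pow_of_le_one (le_of_lt hc0) (le_of_lt hc1) (by omega))
      _ ≤ c ^ (i+1) := this
      _ ≤ max (c ^ (i+1)) (c ^ (j+1)) := le_max_left _ _
  have hdisj : Pairwise (Function.onFun Disjoint S) := by
    intro i j hij
    rcases hij.lt_or_gt with hlt | hlt
    · exact hkey i j hlt
    · exact (hkey j i hlt).symm
  rw [hcover, lintegral_iUnion hmeas hdisj]
  -- per-interval bound
  set b : ℕ → ℝ := fun n => h (c ^ n) / c ^ (n+1) with hb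
  have hbnn : ∀ n, 0 ≤ b n := fun n =>
    div_nonneg (hnn _ (hcpow n) (hcle1 n)) (le_of_lt (hcpow (n+1)))
  have hterm : ∀ n, (∫⁻ t in S n, ENNReal.ofReal ((g t - 2 * g (t / 2)) / t ^ 2))
      ≤ ENNReal.ofReal (b n) := by
    intro n
    have hA : (0:ℝ) ≤ h (c ^ n) / (c ^ (n+1)) ^ 2 :=
      div_nonneg (hnn _ (hcpow n) (hcle1 n)) (sq_nonneg _)
    calc (∫⁻ t in S n, ENNReal.ofReal ((g t - 2 * g (t / 2)) / t ^ 2))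
        ≤ ∫⁻ _ in S n, ENNReal.ofReal (h (c ^ n) / (c ^ (n+1)) ^ 2) := by
          apply setLIntegral_mono measurable_const
          intro t ht
          obtain ⟨ht1, ht2⟩ := ht
          have ht0 : 0 < t := lt_trans (hcpow (n+1)) ht1
          apply ENNReal.ofReal_le_ofReal
          have e : g t - 2 * g (t / 2) = h t := rfl
          rw [e]
          exact div_le_div₀ (hnn _ (hcpow n) (hcle1 n))
            (hmono t (c ^ n) ht0 ht2 (hcle1 n))
            (pow_pos (hcpow (n+1)) 2)
            (pow_le_pow_left₀ (le_of_lt (hcpow (n+1))) (le_of_lt ht1) 2)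
      _ = ENNReal.ofReal (h (c ^ n) / (c ^ (n+1)) ^ 2) * volume (S n) :=
          setLIntegral_const _ _
      _ = ENNReal.ofReal (b n) := by
          rw [hS]
          simp only []
          rw [Real.volume_Ioc, ← ENNReal.ofReal_mul hA]
          congr 1
          have e1 : c ^ n - c ^ (n+1) = c ^ (n+1) := by
            rw [pow_succ, hc]; ring
          rw [e1, hb]
          field_simp
  -- sum the bounds
  calc (∑' n, ∫⁻ t in S n, ENNReal.ofReal ((g t - 2 * g (t / 2)) / t ^ 2))
      ≤ ∑' n, ENNReal.ofReal (b n) := ENNReal.tsum_le_tsum hterm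
    _ ≤ ENNReal.ofReal (2 * g 1) := by
        rw [ENNReal.tsum_eq_iSup_sum]
        apply iSup_le
        intro F
        obtain ⟨N, hFN⟩ := F.exists_nat_subset_range
        rw [← ENNReal.ofReal_sum_of_nonneg (fun i _ => hbnn i)]
        apply ENNReal.ofReal_le_ofReal
        have h1 : ∑ n ∈ F, b n ≤ ∑ n ∈ Finset.range N, b n :=
          Finset.sum_le_sum_of_subset_of_nonneg hFN (fun i _ _ => hbnn i)
        -- telescoping
        set G : ℕ → ℝ := fun n => 2 * g (c ^ n) / c ^ n with hG
        have hbG : ∀ n, b n = G n - G (n+1) := by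
          intro n
          simp only [hb, hG, hh]
          have e : c ^ n / 2 = c ^ (n+1) := by rw [pow_succ, hc]; ring
          rw [e]
          have h1 := hcpow n
          have h2 := hcpow (n+1)
          field_simp
          rw [pow_succ, hc]
          ring
        have h2 : ∑ n ∈ Finset.range N, b n = G 0 - G N := by
          rw [Finset.sum_congr rfl (fun n _ => hbG n)]
          exact Finset.sum_range_sub' G N
        have hGnn : 0 ≤ G N := by
          apply div_nonneg _ (le_of_lt (hcpow N))
          have := hgnn (c ^ N) ⟨le_of_lt (hcpow N), hcle1 N⟩
          linarith
        have hG0 : G 0 = 2 * g 1 := by simp [hG]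
        linarith
    _ ≤ ENNReal.ofReal (4 * Cg) := by
        apply ENNReal.ofReal_le_ofReal
        have h1 : g 1 ≤ Cg := by
          have := hlip 1 ⟨by norm_num, le_refl 1⟩ 0 ⟨le_refl 0, by norm_num⟩
          rw [hg0, sub_zero, sub_zero, abs_one, mul_one] at this
          have hg1 := hgnn 1 ⟨by norm_num, le_refl 1⟩
          rwa [abs_of_nonneg hg1] at this
        have hCg : 0 ≤ Cg := le_trans (hgnn 1 ⟨by norm_num, le_refl 1⟩) h1
        linarith
end

section
/- Comparison between the supporting-normal quantity M and the radial defect N (relation (7.2)/eqn:N-ineq): Identify ℝⁿ = ℝ^{n−1} × ℝ with n ≥ 2. Let L > 0 and let f : ℝ^{n−1} → ℝ be convex and L-Lipschitz on the closed unit ball, with f(0) = 0 and f ≥ 0 there. Let Ω ⊆ ℝⁿ be an open convex set with 0 ∈ ∂Ω such that: (a) (x′, f(x′)) ∈ ∂Ω for every ‖x′‖ ≤ 1; (b) every y ∈ ∂Ω with ‖y‖ ≤ √(1+L²) equals (x′, f(x′)) for some ‖x′‖ ≤ 1; (c) {(x′, s) : ‖x′‖ < 1, f(x′) < s < L+1}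 ⊆ Ω, and every (x′, s) ∈ Ω with ‖x′‖ < 1 and s < L+1 satisfies s > f(x′). For θ ∈ 𝕊^{n−2} and t > 0 set N(t,θ) := t·f′⁺(t,θ) − f(tθ), where f′⁺(t,θ) is the right derivative at s = t of s ↦ f(sθ). Then for every t ∈ (0,1): M₀(t) ≤ sup_{θ ∈ 𝕊^{n−2}} N(t,θ) ≤ √(1+L²) · M₀(√(1+L²)·t). -/
open Set
open scoped RealInnerProductSpace

noncomputable section

/-- A unit vector `ν` is an outer supporting normal of `Ω` at `y` if
`⟨ν, z − y⟩ ≤ 0` for all `z ∈ Ω`. -/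
def IsOuterNormal {E : Type*} [NormedAddCommGroup E] [InnerProductSpace ℝ E]
    (Ω : Set E) (y ν : E) : Prop :=
  ‖ν‖ = 1 ∧ ∀ z ∈ Ω, ⟪ν, z - y⟫ ≤ 0

/-- `M_x(t) = sup {⟨ν, y − x⟩ : y ∈ ∂Ω, 0 < ‖y − x‖ ≤ t, ν an outer supporting normal at y}`
(`sSup ∅ = 0` in `ℝ`, so the empty case gives `0`). -/
noncomputable def Mfun {E : Type*} [NormedAddCommGroup E] [InnerProductSpace ℝ E]
    (Ω : Set E) (x : E) (t : ℝ) : ℝ :=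
  sSup {m : ℝ | ∃ y ν : E, y ∈ frontier Ω ∧ 0 < ‖y - x‖ ∧ ‖y - x‖ ≤ t ∧
    IsOuterNormal Ω y ν ∧ m = ⟪ν, y - x⟫}

/-- `ℝⁿ = ℝ^{n−1} × ℝ`, with the Euclidean (`ℓ²`) product structure. -/
abbrev ProdSpace (m : ℕ) := WithLp 2 (EuclideanSpace ℝ (Fin m) × ℝ)

/-- The point `(x′, s) ∈ ℝ^{m} × ℝ`. -/
def graphPt {m : ℕ} (x' : EuclideanSpace ℝ (Fin m)) (s : ℝ) : ProdSpace m :=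
  (WithLp.equiv 2 (EuclideanSpace ℝ (Fin m) × ℝ)).symm (x', s)

/-- `N(t,θ) = t·f′⁺(t,θ) − f(tθ)`, where `f′⁺(t,θ)` is the right derivative at `s = t`
of the convex function `s ↦ f(sθ)`, rendered as the derivative within `Ici t`. -/
noncomputable def Nrad {m : ℕ} (f : EuclideanSpace ℝ (Fin m) → ℝ) (t : ℝ)
    (θ : EuclideanSpace ℝ (Fin m)) : ℝ :=
  t * derivWithin (fun s : ℝ => f (s • θ)) (Ici t) t - f (t • θ)

/-!
At a boundary point `y = (x', f x')` with `‖x'‖ < 1`, an outer unit normal has the form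
`ν = (ν', -a)` where `ν' / a` is a subgradient of `f` at `x'`; moreover `a ≤ 1` and `‖ν'‖ ≤ a L`,
so `a √(1 + L²) ≥ 1`.

Write `x' = r θ` and `g s = f (s θ)`. The radial component `⟪ν', θ⟫` is at most `a g'₊(r)`, so
`⟪ν, y⟫ ≤ a (r g'₊(r) - g r)`; for convex `g` the map `s ↦ s g'₊(s) - g s` is nondecreasing and
vanishes at `0`, which together with `a ≤ 1` bounds `⟪ν, y⟫` by `N(t, θ)`.

Conversely, the tangent segment from `(t θ, g t)` in direction `(θ, g'₊(t))` lies on or below the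
graph, hence outside `Ω`. Separating it from `Ω` gives an outer normal at a boundary point of norm
at most `√(1 + L²) t` with `⟪ν, y⟫ ≥ a N(t, θ) ≥ N(t, θ) / √(1 + L²)`.
-/

open Filter Topology

theorem norm_le_of_inner_sub_le {F : Type*} [NormedAddCommGroup F] [InnerProductSpace ℝ F]
    {x v : F} {ε K : ℝ} (hε : 0 < ε) (hK : 0 ≤ K)
    (h : ∀ w ∈ Metric.ball x ε, ⟪v, w - x⟫ ≤ K * ‖w - x‖) : ‖v‖ ≤ K := by
  rcases eq_or_ne v 0 with rfl | hv
  · simpa using hK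
  have hv' : 0 < ‖v‖ := norm_pos_iff.2 hv
  set δ := ε / 2
  have hδ : 0 < δ := half_pos hε
  have hstep : ‖(δ / ‖v‖) • v‖ = δ := by
    rw [norm_smul, Real.norm_eq_abs, abs_of_pos (div_pos hδ hv'), div_mul_cancel₀ _ hv'.ne']
  have := h (x + (δ / ‖v‖) • v) (by
    rw [Metric.mem_ball, dist_eq_norm, add_sub_cancel_left, hstep]; exact half_lt_self hε)
  rw [add_sub_cancel_left, hstep, real_inner_smul_right, real_inner_self_eq_norm_sq] at this
  have h2 : δ * ‖v‖ ≤ δ * K := by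
    calc δ * ‖v‖ = δ / ‖v‖ * ‖v‖ ^ 2 := by field_simp
      _ ≤ K * δ := this
      _ = δ * K := mul_comm _ _
  exact le_of_mul_le_mul_left h2 hδ

section OuterNormal

variable {E : Type*} [NormedAddCommGroup E] [InnerProductSpace ℝ E] {Ω : Set E} {x y ν : E}

theorem IsOuterNormal.inner_sub_nonpos_of_mem_closure (hν : IsOuterNormal Ω y ν) {z : E}
    (hz : z ∈ closure Ω) : ⟪ν, z - y⟫ ≤ 0 :=
  closure_minimal (t := {z | ⟪ν, z - y⟫ ≤ 0}) hν.2
    (isClosed_le (by fun_prop) continuous_const) hz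

theorem IsOuterNormal.inner_sub_nonneg (hν : IsOuterNormal Ω y ν) (hx : x ∈ closure Ω) :
    0 ≤ ⟪ν, y - x⟫ := by
  have := hν.inner_sub_nonpos_of_mem_closure hx
  rw [← neg_sub, inner_neg_right] at this
  linarith

theorem Mfun_nonneg (hx : x ∈ closure Ω) (t : ℝ) : 0 ≤ Mfun Ω x t :=
  Real.sSup_nonneg <| by
    rintro _ ⟨y, ν, -, -, -, hν, rfl⟩
    exact hν.inner_sub_nonneg hx

theorem le_Mfun {t : ℝ} (hy : y ∈ frontier Ω) (hy₀ : 0 < ‖y - x‖) (hyt : ‖y - x‖ ≤ t)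
    (hν : IsOuterNormal Ω y ν) : ⟪ν, y - x⟫ ≤ Mfun Ω x t := by
  refine le_csSup ⟨t, ?_⟩ ⟨y, ν, hy, hy₀, hyt, hν, rfl⟩
  rintro _ ⟨y, ν, -, -, hyt, hν, rfl⟩
  calc ⟪ν, y - x⟫ ≤ ‖ν‖ * ‖y - x‖ := real_inner_le_norm _ _
    _ ≤ t := by rw [hν.1, one_mul]; exact hyt

theorem Mfun_le {t b : ℝ} (hb : 0 ≤ b)
    (h : ∀ y ν, y ∈ frontier Ω → 0 < ‖y - x‖ → ‖y - x‖ ≤ t → IsOuterNormal Ω y ν →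
      ⟪ν, y - x⟫ ≤ b) : Mfun Ω x t ≤ b :=
  Real.sSup_le (by rintro _ ⟨y, ν, hy, hy₀, hyt, hν, rfl⟩; exact h y ν hy hy₀ hyt hν) hb

theorem exists_isOuterNormal_of_disjoint [CompleteSpace E] {S : Set E} (hΩo : IsOpen Ω)
    (hΩc : Convex ℝ Ω) (hS : Convex ℝ S) (hdisj : Disjoint Ω S) (hyS : y ∈ S)
    (hyΩ : y ∈ closure Ω) : ∃ ν, IsOuterNormal Ω y ν ∧ ∀ z ∈ S, 0 ≤ ⟪ν, z - y⟫ := by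
  obtain ⟨ℓ, u, hΩu, huS⟩ := geometric_hahn_banach_open hΩc hΩo hS hdisj
  have hℓy : ℓ y = u := le_antisymm
    (closure_minimal (fun z hz => (hΩu z hz).le) (isClosed_le ℓ.continuous continuous_const) hyΩ)
    (huS y hyS)
  set w := (InnerProductSpace.toDual ℝ E).symm ℓ
  have hw : ∀ z, ⟪w, z - y⟫ = ℓ z - u := fun z => by
    rw [InnerProductSpace.toDual_symm_apply, map_sub, hℓy]
  have hw₀ : w ≠ 0 := by
    obtain ⟨z, hz⟩ := mem_closure_iff_nhds.1 hyΩ univ Filter.univ_mem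
    have := hw z
    intro h
    rw [h, inner_zero_left] at this
    linarith [hΩu z hz.2]
  refine ⟨‖w‖⁻¹ • w, ⟨norm_smul_inv_norm hw₀, fun z hz => ?_⟩, fun z hz => ?_⟩ <;>
    rw [real_inner_smul_left, hw]
  · exact mul_nonpos_of_nonneg_of_nonpos (by positivity) (by linarith [hΩu z hz])
  · exact mul_nonneg (by positivity) (by linarith [huS z hz])

end OuterNormal

namespace ConvexOn

variable {S : Set ℝ} {g : ℝ → ℝ} {x y : ℝ}

theorem le_mul_rightDeriv (hg : ConvexOn ℝ S g) (hx : x ∈ interior S) {q a : ℝ}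
    (h : ∀ y ∈ S, x < y → q * (y - x) ≤ a * (g y - g x)) :
    q ≤ a * derivWithin g (Ioi x) x := by
  have hslope := (hasDerivWithinAt_iff_tendsto_slope' self_notMem_Ioi).mp
    (hg.hasDerivWithinAt_rightDeriv_of_mem_interior hx)
  refine ge_of_tendsto (hslope.const_mul a) ?_
  filter_upwards [nhdsWithin_le_nhds (mem_interior_iff_mem_nhds.1 hx), self_mem_nhdsWithin]
    with y hyS (hxy : x < y)
  rw [slope_def_field, ← mul_div_assoc, le_div_iff₀ (sub_pos.2 hxy)]
  exact h y hyS hxy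

theorem rightDeriv_mul_sub_le (hg : ConvexOn ℝ S g) (hx : x ∈ interior S) (hy : y ∈ S)
    (hxy : x ≤ y) : derivWithin g (Ioi x) x * (y - x) ≤ g y - g x := by
  rcases hxy.eq_or_lt with rfl | hxy
  · simp
  have := hg.rightDeriv_le_slope_of_mem_interior hx hy hxy
  rwa [slope_def_field, le_div_iff₀ (sub_pos.2 hxy)] at this

theorem monotoneOn_mul_rightDeriv_sub (hg : ConvexOn ℝ S g) :
    MonotoneOn (fun x => x * derivWithin g (Ioi x) x - g x) (interior S ∩ Ici 0) := by
  rintro r ⟨hr, hr₀ : 0 ≤ r⟩ t ⟨ht, -⟩ hrt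
  rcases hrt.eq_or_lt with rfl | hrt
  · rfl
  have hD : derivWithin g (Ioi r) r ≤ derivWithin g (Ioi t) t :=
    hg.monotoneOn_rightDeriv hr ht hrt.le
  have hsec : g t - g r ≤ derivWithin g (Ioi t) t * (t - r) := by
    have := (hg.slope_le_leftDeriv_of_mem_interior (interior_subset hr) ht hrt).trans
      (hg.leftDeriv_le_rightDeriv_of_mem_interior ht)
    rwa [slope_def_field, div_le_iff₀ (sub_pos.2 hrt)] at this
  dsimp only
  nlinarith [mul_le_mul_of_nonneg_left hD hr₀]

theorem comp_smul_Ioo {F : Type*} [NormedAddCommGroup F] [NormedSpace ℝ F]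
    {f : F → ℝ} (hf : ConvexOn ℝ (Metric.closedBall 0 1) f) {θ : F} (hθ : ‖θ‖ = 1) :
    ConvexOn ℝ (Ioo (-1) 1) (fun s : ℝ => f (s • θ)) := by
  refine (hf.comp_linearMap (LinearMap.toSpanSingleton ℝ F θ)).subset ?_ (convex_Ioo _ _)
  intro s hs
  simpa [norm_smul, hθ, abs_le] using ⟨hs.1.le, hs.2.le⟩

end ConvexOn

section Graph

variable {m : ℕ}

theorem graphPt_zero : graphPt (0 : EuclideanSpace ℝ (Fin m)) 0 = 0 := rfl

theorem graphPt_sub (a b : EuclideanSpace ℝ (Fin m)) (s u : ℝ) :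
    graphPt a s - graphPt b u = graphPt (a - b) (s - u) := rfl

theorem graphPt_add_smul (a b : EuclideanSpace ℝ (Fin m)) (s u h : ℝ) :
    graphPt a s + h • graphPt b u = graphPt (a + h • b) (s + h * u) := rfl

theorem inner_graphPt (ν : ProdSpace m) (a : EuclideanSpace ℝ (Fin m)) (s : ℝ) :
    ⟪ν, graphPt a s⟫ = ⟪ν.fst, a⟫ + ν.snd * s := by
  simp [graphPt, WithLp.prod_inner_apply, mul_comm]

theorem norm_sq_eq_fst_snd (ν : ProdSpace m) : ‖ν‖ ^ 2 = ‖ν.fst‖ ^ 2 + ν.snd ^ 2 := by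
  rw [WithLp.prod_norm_sq_eq_of_L2, Real.norm_eq_abs, sq_abs]

theorem abs_snd_le_norm (ν : ProdSpace m) : |ν.snd| ≤ ‖ν‖ :=
  (Real.norm_eq_abs _).symm.trans_le (WithLp.norm_snd_le _ ν)

theorem norm_graphPt_sq (a : EuclideanSpace ℝ (Fin m)) (s : ℝ) :
    ‖graphPt a s‖ ^ 2 = ‖a‖ ^ 2 + s ^ 2 :=
  norm_sq_eq_fst_snd _

theorem norm_le_norm_graphPt (a : EuclideanSpace ℝ (Fin m)) (s : ℝ) : ‖a‖ ≤ ‖graphPt a s‖ :=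
  WithLp.norm_fst_le _ (graphPt a s)

theorem norm_graphPt_le {L : ℝ} {a : EuclideanSpace ℝ (Fin m)} {s : ℝ} (hs : |s| ≤ L * ‖a‖) :
    ‖graphPt a s‖ ≤ √(1 + L ^ 2) * ‖a‖ := by
  have hsq : s ^ 2 ≤ (L * ‖a‖) ^ 2 := sq_le_sq' (abs_le.1 hs).1 (abs_le.1 hs).2
  rw [← pow_le_pow_iff_left₀ (norm_nonneg _) (by positivity) two_ne_zero, norm_graphPt_sq,
    mul_pow, Real.sq_sqrt (by positivity)]
  nlinarith

end Graph

section GraphBoundary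

variable {m : ℕ} {L : ℝ} {f : EuclideanSpace ℝ (Fin m) → ℝ} {Ω : Set (ProdSpace m)}
  {x' w : EuclideanSpace ℝ (Fin m)} {ν : ProdSpace m}

theorem abs_le_mul_norm_of_lipschitz
    (hlip : ∀ x ∈ Metric.closedBall (0 : EuclideanSpace ℝ (Fin m)) 1,
      ∀ y ∈ Metric.closedBall (0 : EuclideanSpace ℝ (Fin m)) 1, |f x - f y| ≤ L * ‖x - y‖)
    (hf0 : f 0 = 0) (hw : ‖w‖ ≤ 1) : |f w| ≤ L * ‖w‖ := by
  simpa [hf0] using hlip w (mem_closedBall_zero_iff.2 hw) 0 (Metric.mem_closedBall_self zero_le_one)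

theorem IsOuterNormal.inner_fst_sub_le
    (hgraph : ∀ x' : EuclideanSpace ℝ (Fin m), ‖x'‖ ≤ 1 → graphPt x' (f x') ∈ frontier Ω)
    (hν : IsOuterNormal Ω (graphPt x' (f x')) ν) (hw : ‖w‖ ≤ 1) :
    ⟪ν.fst, w - x'⟫ ≤ -ν.snd * (f w - f x') := by
  have := hν.inner_sub_nonpos_of_mem_closure (frontier_subset_closure (hgraph w hw))
  rw [graphPt_sub, inner_graphPt] at this
  linarith

theorem IsOuterNormal.snd_nonpos {u s : ℝ} (hν : IsOuterNormal Ω (graphPt x' u) ν)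
    (hs : graphPt x' s ∈ Ω) (hus : u < s) : ν.snd ≤ 0 := by
  have := hν.2 _ hs
  rw [graphPt_sub, sub_self, inner_graphPt, inner_zero_right, zero_add] at this
  exact nonpos_of_mul_nonpos_left this (sub_pos.2 hus)

theorem IsOuterNormal.snd_nonpos_of_lipschitz (hL : 0 < L)
    (hlip : ∀ x ∈ Metric.closedBall (0 : EuclideanSpace ℝ (Fin m)) 1,
      ∀ y ∈ Metric.closedBall (0 : EuclideanSpace ℝ (Fin m)) 1, |f x - f y| ≤ L * ‖x - y‖)
    (hf0 : f 0 = 0)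
    (hc₁ : ∀ (x' : EuclideanSpace ℝ (Fin m)) (s : ℝ),
      ‖x'‖ < 1 → f x' < s → s < L + 1 → graphPt x' s ∈ Ω)
    (hν : IsOuterNormal Ω (graphPt x' (f x')) ν) (hx' : ‖x'‖ < 1) : ν.snd ≤ 0 := by
  have hfx : f x' < L := by
    linarith [le_abs_self (f x'), abs_le_mul_norm_of_lipschitz hlip hf0 hx'.le,
      mul_lt_of_lt_one_right hL hx']
  exact hν.snd_nonpos (hc₁ x' L hx' hfx (by linarith)) hfx

theorem IsOuterNormal.norm_fst_le (hL : 0 ≤ L)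
    (hlip : ∀ x ∈ Metric.closedBall (0 : EuclideanSpace ℝ (Fin m)) 1,
      ∀ y ∈ Metric.closedBall (0 : EuclideanSpace ℝ (Fin m)) 1, |f x - f y| ≤ L * ‖x - y‖)
    (hgraph : ∀ x' : EuclideanSpace ℝ (Fin m), ‖x'‖ ≤ 1 → graphPt x' (f x') ∈ frontier Ω)
    (hν : IsOuterNormal Ω (graphPt x' (f x')) ν) (hx' : ‖x'‖ < 1) (hsnd : ν.snd ≤ 0) :
    ‖ν.fst‖ ≤ -ν.snd * L := by
  refine norm_le_of_inner_sub_le (x := x') (sub_pos.2 hx') (mul_nonneg (neg_nonneg.2 hsnd) hL)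
    fun w hw => ?_
  rw [Metric.mem_ball, dist_eq_norm] at hw
  have hw₁ : ‖w‖ ≤ 1 := by
    linarith [norm_le_insert' w x']
  calc ⟪ν.fst, w - x'⟫ ≤ -ν.snd * (f w - f x') := hν.inner_fst_sub_le hgraph hw₁
    _ ≤ -ν.snd * (L * ‖w - x'‖) := by
      refine mul_le_mul_of_nonneg_left ((le_abs_self _).trans ?_) (neg_nonneg.2 hsnd)
      exact hlip w (mem_closedBall_zero_iff.2 hw₁) x' (mem_closedBall_zero_iff.2 hx'.le)
    _ = -ν.snd * L * ‖w - x'‖ := by ring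

theorem one_le_neg_snd_mul_sqrt (hν : ‖ν‖ = 1) (hsnd : ν.snd ≤ 0)
    (hfst : ‖ν.fst‖ ≤ -ν.snd * L) : 1 ≤ -ν.snd * √(1 + L ^ 2) := by
  have hnorm := norm_sq_eq_fst_snd ν
  have hsqrt := Real.sq_sqrt (by positivity : (0 : ℝ) ≤ 1 + L ^ 2)
  have hfst_sq := pow_le_pow_left₀ (norm_nonneg _) hfst 2
  rw [hν] at hnorm
  have hsq : 1 ≤ (-ν.snd * √(1 + L ^ 2)) ^ 2 := by
    rw [mul_pow, hsqrt]
    nlinarith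
  nlinarith [mul_nonneg (neg_nonneg.2 hsnd) (Real.sqrt_nonneg (1 + L ^ 2))]

end GraphBoundary

section Radial

variable {m : ℕ} {f : EuclideanSpace ℝ (Fin m) → ℝ} {θ : EuclideanSpace ℝ (Fin m)}
  {t : ℝ}

theorem Nrad_eq_rightDeriv (f : EuclideanSpace ℝ (Fin m) → ℝ) (t : ℝ)
    (θ : EuclideanSpace ℝ (Fin m)) :
    Nrad f t θ = t * derivWithin (fun s : ℝ => f (s • θ)) (Ioi t) t - f (t • θ) := by
  rw [Nrad, derivWithin_Ioi_eq_Ici]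

theorem mem_interior_Ioo_inter_Ici {s : ℝ} (hs₀ : 0 ≤ s) (hs₁ : s < 1) :
    s ∈ interior (Ioo (-1 : ℝ) 1) ∩ Ici 0 := by
  rw [interior_Ioo]
  exact ⟨⟨by linarith, hs₁⟩, hs₀⟩

theorem Nrad_nonneg (hconv : ConvexOn ℝ (Metric.closedBall 0 1) f) (hf0 : f 0 = 0)
    (hθ : ‖θ‖ = 1) (ht₀ : 0 ≤ t) (ht₁ : t < 1) : 0 ≤ Nrad f t θ := by
  have := (hconv.comp_smul_Ioo hθ).monotoneOn_mul_rightDeriv_sub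
    (mem_interior_Ioo_inter_Ici le_rfl (by norm_num)) (mem_interior_Ioo_inter_Ici ht₀ ht₁) ht₀
  simpa [Nrad_eq_rightDeriv, hf0] using this

end Radial

theorem exists_inner_le_Nrad {m : ℕ} {L : ℝ} (hL : 0 < L) {f : EuclideanSpace ℝ (Fin m) → ℝ}
    (hconv : ConvexOn ℝ (Metric.closedBall 0 1) f)
    (hlip : ∀ x ∈ Metric.closedBall (0 : EuclideanSpace ℝ (Fin m)) 1,
      ∀ y ∈ Metric.closedBall (0 : EuclideanSpace ℝ (Fin m)) 1, |f x - f y| ≤ L * ‖x - y‖)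
    (hf0 : f 0 = 0) {Ω : Set (ProdSpace m)}
    (hgraph : ∀ x' : EuclideanSpace ℝ (Fin m), ‖x'‖ ≤ 1 → graphPt x' (f x') ∈ frontier Ω)
    (hb : ∀ y ∈ frontier Ω, ‖y‖ ≤ 1 →
      ∃ x' : EuclideanSpace ℝ (Fin m), ‖x'‖ ≤ 1 ∧ y = graphPt x' (f x'))
    (hc₁ : ∀ (x' : EuclideanSpace ℝ (Fin m)) (s : ℝ),
      ‖x'‖ < 1 → f x' < s → s < L + 1 → graphPt x' s ∈ Ω)
    {t : ℝ} (ht₀ : 0 < t) (ht₁ : t < 1) {y ν : ProdSpace m} (hy : y ∈ frontier Ω)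
    (hy₀ : 0 < ‖y‖) (hyt : ‖y‖ ≤ t) (hν : IsOuterNormal Ω y ν) :
    ∃ θ : EuclideanSpace ℝ (Fin m), ‖θ‖ = 1 ∧ ⟪ν, y⟫ ≤ Nrad f t θ := by
  obtain ⟨x', -, rfl⟩ := hb y hy (hyt.trans ht₁.le)
  have hx't : ‖x'‖ ≤ t := (norm_le_norm_graphPt _ _).trans hyt
  have hx'₀ : x' ≠ 0 := by
    rintro rfl
    rw [hf0, graphPt_zero, norm_zero] at hy₀
    exact hy₀.false
  set r := ‖x'‖
  set θ := r⁻¹ • x'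
  have hθ : ‖θ‖ = 1 := norm_smul_inv_norm hx'₀
  have hrθ : r • θ = x' := smul_inv_smul₀ (norm_ne_zero_iff.2 hx'₀) x'
  have hg := hconv.comp_smul_Ioo hθ
  have hsnd := hν.snd_nonpos_of_lipschitz hL hlip hf0 hc₁ (hx't.trans_lt ht₁)
  have hslope : ⟪ν.fst, θ⟫ ≤ -ν.snd * derivWithin (fun s : ℝ => f (s • θ)) (Ioi r) r := by
    refine hg.le_mul_rightDeriv (mem_interior_Ioo_inter_Ici (norm_nonneg _) (hx't.trans_lt ht₁)).1
      fun s hs _ => ?_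
    have := hν.inner_fst_sub_le hgraph (w := s • θ) (by
      rw [norm_smul, hθ, mul_one, Real.norm_eq_abs, abs_le]; exact ⟨hs.1.le, hs.2.le⟩)
    rwa [← hrθ, ← sub_smul, real_inner_smul_right, mul_comm] at this
  have hmono := hg.monotoneOn_mul_rightDeriv_sub
    (mem_interior_Ioo_inter_Ici (norm_nonneg _) (hx't.trans_lt ht₁))
    (mem_interior_Ioo_inter_Ici ht₀.le ht₁) hx't
  have hN := Nrad_nonneg hconv hf0 hθ ht₀.le ht₁
  have hsnd₁ : -ν.snd ≤ 1 := (neg_le_abs _).trans ((abs_snd_le_norm ν).trans_eq hν.1)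
  refine ⟨θ, hθ, ?_⟩
  rw [Nrad_eq_rightDeriv] at hN ⊢
  calc ⟪ν, graphPt x' (f x')⟫ = r * ⟪ν.fst, θ⟫ + ν.snd * f (r • θ) := by
        rw [inner_graphPt, ← hrθ, real_inner_smul_right]
    _ ≤ -ν.snd * (r * derivWithin (fun s : ℝ => f (s • θ)) (Ioi r) r - f (r • θ)) := by
        nlinarith [mul_le_mul_of_nonneg_left hslope (norm_nonneg x')]
    _ ≤ -ν.snd * (t * derivWithin (fun s : ℝ => f (s • θ)) (Ioi t) t - f (t • θ)) :=
        mul_le_mul_of_nonneg_left hmono (neg_nonneg.2 hsnd)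
    _ ≤ _ := mul_le_of_le_one_left hN hsnd₁

theorem exists_isOuterNormal_inner_tangent_nonneg {m : ℕ} {L : ℝ} (hL : 0 ≤ L)
    {f : EuclideanSpace ℝ (Fin m) → ℝ} (hconv : ConvexOn ℝ (Metric.closedBall 0 1) f)
    (hlip : ∀ x ∈ Metric.closedBall (0 : EuclideanSpace ℝ (Fin m)) 1,
      ∀ y ∈ Metric.closedBall (0 : EuclideanSpace ℝ (Fin m)) 1, |f x - f y| ≤ L * ‖x - y‖)
    (hf0 : f 0 = 0) {Ω : Set (ProdSpace m)} (hopen : IsOpen Ω) (hconvΩ : Convex ℝ Ω)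
    (hgraph : ∀ x' : EuclideanSpace ℝ (Fin m), ‖x'‖ ≤ 1 → graphPt x' (f x') ∈ frontier Ω)
    (hc₂ : ∀ (x' : EuclideanSpace ℝ (Fin m)) (s : ℝ),
      graphPt x' s ∈ Ω → ‖x'‖ < 1 → s < L + 1 → f x' < s)
    {θ : EuclideanSpace ℝ (Fin m)} (hθ : ‖θ‖ = 1) {t : ℝ} (ht₀ : 0 ≤ t) (ht₁ : t < 1) :
    ∃ ν, IsOuterNormal Ω (graphPt (t • θ) (f (t • θ))) ν ∧
      0 ≤ ⟪ν.fst, θ⟫ + ν.snd * derivWithin (fun s : ℝ => f (s • θ)) (Ioi t) t := by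
  set c := derivWithin (fun s : ℝ => f (s • θ)) (Ioi t) t
  set y := graphPt (t • θ) (f (t • θ))
  set h₀ := (1 - t) / 2 with hh₀_def
  have hh₀ : 0 < h₀ := by linarith
  have hnorm : ∀ s, 0 ≤ s → ‖s • θ‖ = s := fun s hs => by
    rw [norm_smul, hθ, mul_one, Real.norm_of_nonneg hs]
  have hyΩ : y ∈ frontier Ω := hgraph _ ((hnorm t ht₀).trans_le ht₁.le)
  have hdisj : Disjoint Ω (segment ℝ y (y + h₀ • graphPt θ c)) := by
    rw [Set.disjoint_right, segment_eq_image']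
    rintro _ ⟨s, ⟨hs₀, hs₁⟩, rfl⟩ hzΩ
    dsimp only at hzΩ
    rw [add_sub_cancel_left, smul_smul, graphPt_add_smul, ← add_smul] at hzΩ
    set h := s * h₀
    have hh : 0 ≤ h := mul_nonneg hs₀ hh₀.le
    have hth : t + h < 1 := by linarith [mul_le_of_le_one_left hh₀.le hs₁]
    have htan := (hconv.comp_smul_Ioo hθ).rightDeriv_mul_sub_le
      (mem_interior_Ioo_inter_Ici ht₀ ht₁).1 ⟨by linarith, hth⟩ (le_add_of_nonneg_right hh)
    have hlin := abs_le_mul_norm_of_lipschitz hlip hf0 ((hnorm _ (by linarith)).trans_le hth.le)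
    rw [hnorm _ (by linarith), abs_le] at hlin
    have := hc₂ _ _ hzΩ ((hnorm _ (by linarith)).trans_lt hth) (by nlinarith)
    linarith
  obtain ⟨ν, hν, hνS⟩ := exists_isOuterNormal_of_disjoint hopen hconvΩ (convex_segment _ _) hdisj
    (left_mem_segment _ _ _) (frontier_subset_closure hyΩ)
  refine ⟨ν, hν, ?_⟩
  have := hνS _ (right_mem_segment _ _ _)
  rwa [add_sub_cancel_left, real_inner_smul_right, inner_graphPt,
    mul_nonneg_iff_of_pos_left hh₀] at this

theorem Nrad_le_mul_Mfun {m : ℕ} {L : ℝ} (hL : 0 < L) {f : EuclideanSpace ℝ (Fin m) → ℝ}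
    (hconv : ConvexOn ℝ (Metric.closedBall 0 1) f)
    (hlip : ∀ x ∈ Metric.closedBall (0 : EuclideanSpace ℝ (Fin m)) 1,
      ∀ y ∈ Metric.closedBall (0 : EuclideanSpace ℝ (Fin m)) 1, |f x - f y| ≤ L * ‖x - y‖)
    (hf0 : f 0 = 0) {Ω : Set (ProdSpace m)} (hopen : IsOpen Ω) (hconvΩ : Convex ℝ Ω)
    (hgraph : ∀ x' : EuclideanSpace ℝ (Fin m), ‖x'‖ ≤ 1 → graphPt x' (f x') ∈ frontier Ω)
    (hc₁ : ∀ (x' : EuclideanSpace ℝ (Fin m)) (s : ℝ),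
      ‖x'‖ < 1 → f x' < s → s < L + 1 → graphPt x' s ∈ Ω)
    (hc₂ : ∀ (x' : EuclideanSpace ℝ (Fin m)) (s : ℝ),
      graphPt x' s ∈ Ω → ‖x'‖ < 1 → s < L + 1 → f x' < s)
    {θ : EuclideanSpace ℝ (Fin m)} (hθ : ‖θ‖ = 1) {t : ℝ} (ht₀ : 0 < t) (ht₁ : t < 1) :
    Nrad f t θ ≤ √(1 + L ^ 2) * Mfun Ω 0 (√(1 + L ^ 2) * t) := by
  obtain ⟨ν, hν, htan⟩ := exists_isOuterNormal_inner_tangent_nonneg hL.le hconv hlip hf0 hopen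
    hconvΩ hgraph hc₂ hθ ht₀.le ht₁
  have htθ : ‖t • θ‖ = t := by rw [norm_smul, hθ, mul_one, Real.norm_of_nonneg ht₀.le]
  have hft := abs_le_mul_norm_of_lipschitz hlip hf0 (htθ.trans_le ht₁.le)
  rw [htθ] at hft
  have hsnd := hν.snd_nonpos_of_lipschitz hL hlip hf0 hc₁ (htθ.trans_lt ht₁)
  have hone := one_le_neg_snd_mul_sqrt hν.1 hsnd
    (hν.norm_fst_le hL.le hlip hgraph (htθ.trans_lt ht₁) hsnd)
  have hN := Nrad_nonneg hconv hf0 hθ ht₀.le ht₁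
  have hM : ⟪ν, graphPt (t • θ) (f (t • θ)) - 0⟫ ≤ Mfun Ω 0 (√(1 + L ^ 2) * t) := by
    refine le_Mfun (hgraph _ (htθ.trans_le ht₁.le)) ?_ ?_ hν <;> rw [sub_zero]
    · exact ht₀.trans_le (htθ.symm.trans_le (norm_le_norm_graphPt _ _))
    · have := norm_graphPt_le (a := t • θ) (s := f (t • θ)) (by rwa [htθ])
      rwa [htθ] at this
  have hinner : -ν.snd * Nrad f t θ ≤ ⟪ν, graphPt (t • θ) (f (t • θ)) - 0⟫ := by
    rw [sub_zero, inner_graphPt, real_inner_smul_right, Nrad_eq_rightDeriv]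
    nlinarith [mul_le_mul_of_nonneg_left htan ht₀.le]
  calc Nrad f t θ ≤ -ν.snd * √(1 + L ^ 2) * Nrad f t θ := le_mul_of_one_le_left hN hone
    _ = √(1 + L ^ 2) * (-ν.snd * Nrad f t θ) := by ring
    _ ≤ √(1 + L ^ 2) * Mfun Ω 0 (√(1 + L ^ 2) * t) :=
      mul_le_mul_of_nonneg_left (hinner.trans hM) (Real.sqrt_nonneg _)

theorem M_N_comparison_general {m : ℕ} (L : ℝ) (hL : 0 < L)
    (f : EuclideanSpace ℝ (Fin m) → ℝ)
    (hconv : ConvexOn ℝ (Metric.closedBall (0 : EuclideanSpace ℝ (Fin m)) 1) f)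
    (hlip : ∀ x ∈ Metric.closedBall (0 : EuclideanSpace ℝ (Fin m)) 1,
      ∀ y ∈ Metric.closedBall (0 : EuclideanSpace ℝ (Fin m)) 1,
        |f x - f y| ≤ L * ‖x - y‖)
    (hf0 : f 0 = 0)
    (Ω : Set (ProdSpace m)) (hopen : IsOpen Ω) (hconvΩ : Convex ℝ Ω)
    (h0 : (0 : ProdSpace m) ∈ frontier Ω)
    (ha : ∀ x' : EuclideanSpace ℝ (Fin m), ‖x'‖ ≤ 1 → graphPt x' (f x') ∈ frontier Ω)
    (hb : ∀ y ∈ frontier Ω, ‖y‖ ≤ Real.sqrt (1 + L ^ 2) →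
      ∃ x' : EuclideanSpace ℝ (Fin m), ‖x'‖ ≤ 1 ∧ y = graphPt x' (f x'))
    (hc₁ : ∀ (x' : EuclideanSpace ℝ (Fin m)) (s : ℝ),
      ‖x'‖ < 1 → f x' < s → s < L + 1 → graphPt x' s ∈ Ω)
    (hc₂ : ∀ (x' : EuclideanSpace ℝ (Fin m)) (s : ℝ),
      graphPt x' s ∈ Ω → ‖x'‖ < 1 → s < L + 1 → f x' < s) :
    ∀ t ∈ Ioo (0:ℝ) 1,
      Mfun Ω 0 t ≤
        sSup {a : ℝ | ∃ θ : EuclideanSpace ℝ (Fin m), ‖θ‖ = 1 ∧ a = Nrad f t θ} ∧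
      sSup {a : ℝ | ∃ θ : EuclideanSpace ℝ (Fin m), ‖θ‖ = 1 ∧ a = Nrad f t θ} ≤
        Real.sqrt (1 + L ^ 2) * Mfun Ω 0 (Real.sqrt (1 + L ^ 2) * t) := by
  rintro t ⟨ht₀, ht₁⟩
  have hN : ∀ θ : EuclideanSpace ℝ (Fin m), ‖θ‖ = 1 →
      Nrad f t θ ≤ Real.sqrt (1 + L ^ 2) * Mfun Ω 0 (Real.sqrt (1 + L ^ 2) * t) :=
    fun θ hθ => Nrad_le_mul_Mfun hL hconv hlip hf0 hopen hconvΩ ha hc₁ hc₂ hθ ht₀ ht₁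
  have hbdd : BddAbove {a : ℝ | ∃ θ : EuclideanSpace ℝ (Fin m), ‖θ‖ = 1 ∧ a = Nrad f t θ} :=
    ⟨_, by rintro _ ⟨θ, hθ, rfl⟩; exact hN θ hθ⟩
  refine ⟨Mfun_le (Real.sSup_nonneg ?_) fun y ν hy hy₀ hyt hν => ?_, Real.sSup_le ?_ ?_⟩
  · rintro _ ⟨θ, hθ, rfl⟩
    exact Nrad_nonneg hconv hf0 hθ ht₀.le ht₁
  · have hb₁ : ∀ y ∈ frontier Ω, ‖y‖ ≤ 1 →
        ∃ x' : EuclideanSpace ℝ (Fin m), ‖x'‖ ≤ 1 ∧ y = graphPt x' (f x') :=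
      fun y hy hy₁ => hb y hy (hy₁.trans (Real.one_le_sqrt.2 (by nlinarith)))
    rw [sub_zero] at hy₀ hyt ⊢
    obtain ⟨θ, hθ, hle⟩ :=
      exists_inner_le_Nrad hL hconv hlip hf0 ha hb₁ hc₁ ht₀ ht₁ hy hy₀ hyt hν
    exact hle.trans (le_csSup hbdd ⟨θ, hθ, rfl⟩)
  · rintro _ ⟨θ, hθ, rfl⟩
    exact hN θ hθ
  · exact mul_nonneg (Real.sqrt_nonneg _) (Mfun_nonneg (frontier_subset_closure h0) _)

/-- Comparison between the supporting-normal quantity `M` and the radial defect `N`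
(relation (7.2)/eqn:N-ineq), with `m = n − 1 ≥ 1`. -/
theorem M_N_comparison {m : ℕ} (hm : 1 ≤ m) (L : ℝ) (hL : 0 < L)
    (f : EuclideanSpace ℝ (Fin m) → ℝ)
    (hconv : ConvexOn ℝ (Metric.closedBall (0 : EuclideanSpace ℝ (Fin m)) 1) f)
    (hlip : ∀ x ∈ Metric.closedBall (0 : EuclideanSpace ℝ (Fin m)) 1,
      ∀ y ∈ Metric.closedBall (0 : EuclideanSpace ℝ (Fin m)) 1,
        |f x - f y| ≤ L * ‖x - y‖)
    (hf0 : f 0 = 0)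
    (hfnn : ∀ x ∈ Metric.closedBall (0 : EuclideanSpace ℝ (Fin m)) 1, 0 ≤ f x)
    (Ω : Set (ProdSpace m)) (hopen : IsOpen Ω) (hconvΩ : Convex ℝ Ω)
    (h0 : (0 : ProdSpace m) ∈ frontier Ω)
    (ha : ∀ x' : EuclideanSpace ℝ (Fin m), ‖x'‖ ≤ 1 → graphPt x' (f x') ∈ frontier Ω)
    (hb : ∀ y ∈ frontier Ω, ‖y‖ ≤ Real.sqrt (1 + L ^ 2) →
      ∃ x' : EuclideanSpace ℝ (Fin m), ‖x'‖ ≤ 1 ∧ y = graphPt x' (f x'))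
    (hc₁ : ∀ (x' : EuclideanSpace ℝ (Fin m)) (s : ℝ),
      ‖x'‖ < 1 → f x' < s → s < L + 1 → graphPt x' s ∈ Ω)
    (hc₂ : ∀ (x' : EuclideanSpace ℝ (Fin m)) (s : ℝ),
      graphPt x' s ∈ Ω → ‖x'‖ < 1 → s < L + 1 → f x' < s) :
    ∀ t ∈ Ioo (0:ℝ) 1,
      Mfun Ω 0 t ≤
        sSup {a : ℝ | ∃ θ : EuclideanSpace ℝ (Fin m), ‖θ‖ = 1 ∧ a = Nrad f t θ} ∧
      sSup {a : ℝ | ∃ θ : EuclideanSpace ℝ (Fin m), ‖θ‖ = 1 ∧ a = Nrad f t θ} ≤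
        Real.sqrt (1 + L ^ 2) * Mfun Ω 0 (Real.sqrt (1 + L ^ 2) * t) :=
  M_N_comparison_general L hL f hconv hlip hf0 Ω hopen hconvΩ h0 ha hb hc₁ hc₂
end
end

section
/- Uniformly acute intersection of a sphere with a convex graph boundary (geometric content of the proof of Proposition 8.2/L1-harmonic): Let n ≥ 2, let Ω ⊆ ℝⁿ be an open convex set with 0 ∈ ∂Ω, let e ∈ ℝⁿ be a unit vector, and let c*, c₁ > 0. Assume that for every y ∈ ∂Ω with ‖y‖ ≤ 4c₁ and every outer supporting normal ν of Ω at y one has ⟨ν, e⟩ ≤ −c* and ⟨ν, y⟩ ≤ (c*/40)·‖y‖. Set z₀ := −(c₁/10)·e. Then for every y ∈ ∂Ω with ‖y − z₀‖ = 2c₁ and every outer supporting normal ν of Ω at y, ⟨ν, y − z₀⟩ ≤ −(c*/25)·c₁. In other words, the sphere ∂B_{2c₁}(z₀) meets ∂Ω at a uniformly acute angle. -/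
open Set
open scoped RealInnerProductSpace

noncomputable section

/-- Uniformly acute intersection of a sphere with a convex graph boundary
(geometric content of the proof of Proposition 8.2). Here `z₀ = −(c₁/10)·e`. -/
theorem acute_sphere_graph_intersection {n : ℕ} (hn : 2 ≤ n)
    (Ω : Set (EuclideanSpace ℝ (Fin n))) (hopen : IsOpen Ω) (hconv : Convex ℝ Ω)
    (h0 : (0 : EuclideanSpace ℝ (Fin n)) ∈ frontier Ω)
    (e : EuclideanSpace ℝ (Fin n)) (he : ‖e‖ = 1)
    (cstar c₁ : ℝ) (hcstar : 0 < cstar) (hc₁ : 0 < c₁)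
    (hhyp : ∀ y ∈ frontier Ω, ‖y‖ ≤ 4 * c₁ →
      ∀ ν : EuclideanSpace ℝ (Fin n), IsOuterNormal Ω y ν →
        ⟪ν, e⟫ ≤ -cstar ∧ ⟪ν, y⟫ ≤ (cstar / 40) * ‖y‖) :
    ∀ y ∈ frontier Ω, ‖y - (-(c₁ / 10) • e)‖ = 2 * c₁ →
      ∀ ν : EuclideanSpace ℝ (Fin n), IsOuterNormal Ω y ν →
        ⟪ν, y - (-(c₁ / 10) • e)⟫ ≤ -(cstar / 25) * c₁ := by
  intro y hy hsph ν hν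
  have hze : ‖(-(c₁ / 10) • e : EuclideanSpace ℝ (Fin n))‖ = c₁ / 10 := by
    rw [norm_smul, he, mul_one, norm_neg, Real.norm_eq_abs, abs_of_nonneg (by positivity)]
  have hynorm : ‖y‖ ≤ 4 * c₁ := by
    have : ‖y‖ ≤ ‖y - (-(c₁ / 10) • e)‖ + ‖(-(c₁ / 10) • e : EuclideanSpace ℝ (Fin n))‖ := by
      simpa using norm_sub_le_norm_sub_add_norm_sub y (-(c₁ / 10) • e) 0
    rw [hsph, hze] at this
    linarith
  obtain ⟨h1, h2⟩ := hhyp y hy hynorm ν hν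
  have hyn : ‖y‖ ≤ 2 * c₁ + c₁ / 10 := by
    have : ‖y‖ ≤ ‖y - (-(c₁ / 10) • e)‖ + ‖(-(c₁ / 10) • e : EuclideanSpace ℝ (Fin n))‖ := by
      simpa using norm_sub_le_norm_sub_add_norm_sub y (-(c₁ / 10) • e) 0
    rw [hsph, hze] at this; linarith
  have hsplit : ⟪ν, y - (-(c₁ / 10) • e)⟫ = ⟪ν, y⟫ + (c₁ / 10) * ⟪ν, e⟫ := by
    rw [inner_sub_right, inner_smul_right]; ring
  rw [hsplit]
  have h2' : ⟪ν, y⟫ ≤ (cstar / 40) * (2 * c₁ + c₁ / 10) := by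
    have := mul_le_mul_of_nonneg_left hyn (by positivity : (0:ℝ) ≤ cstar / 40)
    linarith
  nlinarith [mul_le_mul_of_nonneg_left h1 (by positivity : (0:ℝ) ≤ c₁ / 10)]
end
end
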